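/- Let A be an m × n matrix with rational entries that is totally unimodular, let b ∈ ℚ^m have all entries integer, and let c ∈ ℚ^n. Consider the linear program of maximizing cᵀx over the polyhedron P = { x ∈ ℚ^n : A x ≤ b and x ≥ 0 (componentwise) }. If the maximum of cᵀx over P is attained at some point x* ∈ P, then there exists x ∈ P with all entries integer such that cᵀx = cᵀx*, i.e., the linear program has an integer optimal solution. -/

import Mathlib

/-!
Write `P = {x | M *ᵥ x ≤ d}` with `M = [A; -1]`, again totally unimodular, and `d = (b, 0)`.
Enlarging the set of active constraints of `x*` as far as possible leads to a minimal face of `P`,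
which is the affine subspace `{x | M_T *ᵥ x = d_T}` for the set `T` of its active constraints.
By Cramer's rule that subspace contains an integral point `z`, since the nonsingular square
submatrices of `M` have determinant `±1`. Every constraint active at `x*` is active at `z`, so
`x* + ε • (x* - z) ∈ P` for some `ε > 0`, and optimality of `x*` forces `c ⬝ᵥ z = c ⬝ᵥ x*`.
-/

open scoped Matrix

namespace Matrix

section Polyhedron

variable {ι κ 𝕜 : Type*} [Fintype κ] [Field 𝕜]

def activeSet (M : Matrix ι κ 𝕜) (d : ι → 𝕜) (x : κ → 𝕜) : Set ι :=
  {i | (M *ᵥ x) i = d i}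

variable {M : Matrix ι κ 𝕜} {d : ι → 𝕜}

lemma mem_activeSet {x : κ → 𝕜} {i : ι} : i ∈ activeSet M d x ↔ (M *ᵥ x) i = d i := Iff.rfl

lemma mulVec_add_smul_apply (M : Matrix ι κ 𝕜) (z v : κ → 𝕜) (t : 𝕜) (i : ι) :
    (M *ᵥ (z + t • v)) i = (M *ᵥ z) i + t * (M *ᵥ v) i := by
  simp [mulVec_add, mulVec_smul]

variable [LinearOrder 𝕜] [IsStrictOrderedRing 𝕜]

/-- Ratio test: `t` is the longest step from `z` along `v` that stays in `{x | M *ᵥ x ≤ d}`. -/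
lemma exists_blocking_step [Finite ι] {z v : κ → 𝕜} (hz : M *ᵥ z ≤ d)
    (hv : ∃ i, 0 < (M *ᵥ v) i) :
    ∃ t : 𝕜, 0 ≤ t ∧ M *ᵥ (z + t • v) ≤ d ∧
      ∃ i, 0 < (M *ᵥ v) i ∧ i ∈ activeSet M d (z + t • v) := by
  classical
  cases nonempty_fintype ι
  set ratio : ι → 𝕜 := fun i => (d i - (M *ᵥ z) i) / (M *ᵥ v) i
  obtain ⟨i₀, hi₀, hmin⟩ := Finset.exists_min_image {i | 0 < (M *ᵥ v) i} ratio
    (by obtain ⟨i, hi⟩ := hv; exact ⟨i, (Finset.mem_filter_univ _).2 hi⟩)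
  rw [Finset.mem_filter_univ] at hi₀
  have hratio : ∀ i, 0 < (M *ᵥ v) i → (M *ᵥ z) i + ratio i * (M *ᵥ v) i = d i := by
    intro i hi
    simp only [ratio, div_mul_cancel₀ _ hi.ne', add_sub_cancel]
  have hratio₀ : 0 ≤ ratio i₀ := div_nonneg (sub_nonneg.2 (hz i₀)) hi₀.le
  refine ⟨ratio i₀, hratio₀, fun i => ?_, i₀, hi₀, ?_⟩
  · rw [mulVec_add_smul_apply]
    rcases lt_or_ge 0 ((M *ᵥ v) i) with hi | hi
    · calc (M *ᵥ z) i + ratio i₀ * (M *ᵥ v) i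
          ≤ (M *ᵥ z) i + ratio i * (M *ᵥ v) i := by
            gcongr
            exact hmin i ((Finset.mem_filter_univ _).2 hi)
        _ = d i := hratio i hi
    · linarith [hz i, mul_nonpos_of_nonneg_of_nonpos hratio₀ hi]
  · rw [mem_activeSet, mulVec_add_smul_apply, hratio i₀ hi₀]

lemma exists_pos_mulVec_add_smul_le [Finite ι] {y v : κ → 𝕜} (hy : M *ᵥ y ≤ d)
    (hv : ∀ i ∈ activeSet M d y, (M *ᵥ v) i ≤ 0) :
    ∃ t : 𝕜, 0 < t ∧ M *ᵥ (y + t • v) ≤ d := by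
  by_cases hblock : ∃ i, 0 < (M *ᵥ v) i
  · obtain ⟨t, ht, hfeas, i, hi, hact⟩ := exists_blocking_step hy hblock
    refine ⟨t, ht.lt_of_ne fun h => ?_, hfeas⟩
    rw [← h, zero_smul, add_zero] at hact
    exact (hv i hact).not_gt hi
  · push Not at hblock
    refine ⟨1, one_pos, fun i => ?_⟩
    rw [one_smul, mulVec_add, Pi.add_apply]
    exact add_le_of_le_of_nonpos (hy i) (hblock i)

/-- Take `z` with a maximal active set: a constraint violated on the affine subspace cut out by
the active constraints of `z` would, by the ratio test, let us enlarge that set. -/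
lemma exists_minimal_face_point [Finite ι] {y : κ → 𝕜} (hy : M *ᵥ y ≤ d) :
    ∃ z, M *ᵥ z ≤ d ∧ activeSet M d y ⊆ activeSet M d z ∧
      ∀ x, Set.EqOn (M *ᵥ x) d (activeSet M d z) → M *ᵥ x ≤ d := by
  obtain ⟨z, ⟨hz, hyz⟩, hmax⟩ := exists_maximalFor_of_wellFoundedGT
    (fun z => M *ᵥ z ≤ d ∧ activeSet M d y ⊆ activeSet M d z) (activeSet M d) ⟨y, hy, le_rfl⟩
  refine ⟨z, hz, hyz, fun x hx => ?_⟩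
  by_contra hinfeas
  obtain ⟨i₀, hi₀⟩ : ∃ i, d i < (M *ᵥ x) i := by simpa [Pi.le_def] using hinfeas
  have hdir : ∀ i ∈ activeSet M d z, (M *ᵥ (x - z)) i = 0 := by
    intro i hi
    rw [mulVec_sub, Pi.sub_apply, hx hi, hi, sub_self]
  obtain ⟨t, -, hfeas, i, hi, hact⟩ := exists_blocking_step (v := x - z) hz
    ⟨i₀, by rw [mulVec_sub, Pi.sub_apply]; linarith [hz i₀]⟩
  have hsub : activeSet M d z ⊆ activeSet M d (z + t • (x - z)) := by
    intro j hj
    rw [mem_activeSet, mulVec_add_smul_apply, hdir j hj, mul_zero, add_zero, hj]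
  have := hmax ⟨hfeas, hyz.trans hsub⟩ hsub hact
  exact hi.ne' (hdir i this)

lemma dotProduct_eq_of_activeSet_subset [Finite ι] {c x y : κ → 𝕜} (hy : M *ᵥ y ≤ d)
    (hmax : ∀ x, M *ᵥ x ≤ d → c ⬝ᵥ x ≤ c ⬝ᵥ y) (hx : M *ᵥ x ≤ d)
    (hxy : activeSet M d y ⊆ activeSet M d x) : c ⬝ᵥ x = c ⬝ᵥ y := by
  obtain ⟨t, ht, hfeas⟩ := exists_pos_mulVec_add_smul_le (v := y - x) hy fun i hi => by
    rw [mulVec_sub, Pi.sub_apply, hi, hxy hi, sub_self]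
  have hstep := hmax _ hfeas
  rw [dotProduct_add, dotProduct_smul, dotProduct_sub, smul_eq_mul,
    add_le_iff_nonpos_right] at hstep
  exact le_antisymm (hmax x hx) (sub_nonpos.1 (nonpos_of_mul_nonpos_right hstep ht))

lemma fromRows_neg_one_mulVec_le_iff [DecidableEq κ] (A : Matrix ι κ 𝕜) (b : ι → 𝕜)
    (x : κ → 𝕜) : fromRows A (-1 : Matrix κ κ 𝕜) *ᵥ x ≤ Sum.elim b 0 ↔ A *ᵥ x ≤ b ∧ 0 ≤ x := by
  rw [fromRows_mulVec, neg_mulVec, one_mulVec, Sum.elim_le_elim_iff, neg_nonpos]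

end Polyhedron

section TotallyUnimodular

variable {ι κ σ : Type*}

lemma mulVec_extend_zero {R : Type*} [Semiring R] [Fintype κ] [Fintype σ] (E : Matrix ι κ R)
    {a : σ → κ} (ha : a.Injective) (w : σ → R) :
    E *ᵥ Function.extend a w 0 = E.submatrix id a *ᵥ w := by
  ext i
  refine (Fintype.sum_of_injective a ha _ _ (fun j hj => ?_) fun l => ?_).symm
  · rw [Function.extend_apply' _ _ _ (by simpa using hj), Pi.zero_apply, mul_zero]
  · rw [ha.extend_apply]
    rfl

lemma exists_submatrix_det_ne_zero_of_linearIndependent_col {K : Type*} [Field K] [Fintype ι]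
    [Fintype κ] [DecidableEq κ] {E : Matrix ι κ K} (hE : LinearIndependent K E.col) :
    ∃ ρ : κ → ι, (E.submatrix ρ id).det ≠ 0 := by
  have hrows : Submodule.span K (Set.range E.row) = ⊤ := by
    apply Submodule.eq_top_of_finrank_eq
    rw [← rank_eq_finrank_span_row, ← rank_transpose, LinearIndependent.rank_matrix hE,
      Module.finrank_fintype_fun_eq_card]
  obtain ⟨σ, a, -, hspan, hli⟩ := exists_linearIndependent' K E.row
  let e : κ ≃ σ := (Pi.basisFun K κ).indexEquiv (.mk hli (by rw [hspan, hrows]))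
  refine ⟨a ∘ e, ((isUnit_iff_isUnit_det _).1 ?_).ne_zero⟩
  exact linearIndependent_rows_iff_isUnit.1 (hli.comp e e.injective)

lemma IsTotallyUnimodular.exists_map_intCast_eq {A : Matrix ι κ ℚ}
    (hA : A.IsTotallyUnimodular) : ∃ B : Matrix ι κ ℤ, B.map (↑) = A := by
  choose s hs using hA.apply
  exact ⟨of fun i j => (s i j : ℤ), by ext i j; simp [← hs i j]⟩

lemma IsTotallyUnimodular.exists_eq_intCast_of_mulVec_eq [Fintype κ] [DecidableEq κ]
    {B : Matrix κ κ ℚ} (hB : B.IsTotallyUnimodular) (hdet : B.det ≠ 0) {w : κ → ℚ} {f : κ → ℤ}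
    (hw : B *ᵥ w = Int.cast ∘ f) : ∃ z : κ → ℤ, w = Int.cast ∘ z := by
  obtain ⟨C, rfl⟩ := hB.exists_map_intCast_eq
  have hC : IsUnit C.det := by
    obtain ⟨s, hs⟩ := (isTotallyUnimodular_iff_fintype _).1 hB κ id id
    rw [submatrix_id_id] at hs
    have hCs : C.det = s := by
      rw [← Int.cast_inj (α := ℚ), SignType.intCast_cast, hs]
      exact (Int.castRingHom ℚ).map_det C
    rw [← hs] at hdet
    rw [hCs, Int.isUnit_iff]
    cases s <;> simp_all
  refine ⟨C⁻¹ *ᵥ f, ?_⟩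
  calc w = (C⁻¹ * C).map (Int.cast : ℤ → ℚ) *ᵥ w := by
        rw [nonsing_inv_mul _ hC, Matrix.map_one _ Int.cast_zero Int.cast_one, one_mulVec]
    _ = C⁻¹.map Int.cast *ᵥ C.map Int.cast *ᵥ w := by
        rw [mulVec_mulVec]
        exact congrArg (· *ᵥ w) (Matrix.map_mul (f := Int.castRingHom ℚ))
    _ = Int.cast ∘ (C⁻¹ *ᵥ f) := by
        ext i
        rw [hw]
        exact ((Int.castRingHom ℚ).map_mulVec _ _ i).symm

/-- Solve on a basis of the column space and on rows making that column block square and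
nonsingular; the solution there is integral, and padding it with zeros solves the whole system. -/
lemma IsTotallyUnimodular.exists_intCast_mulVec_eq [Finite ι] [Fintype κ]
    {E : Matrix ι κ ℚ} (hE : E.IsTotallyUnimodular) {f : ι → ℤ} {y : κ → ℚ}
    (hy : E *ᵥ y = Int.cast ∘ f) : ∃ z : κ → ℤ, E *ᵥ (Int.cast ∘ z) = Int.cast ∘ f := by
  classical
  cases nonempty_fintype ι
  obtain ⟨σ, a, ha, hspan, hli⟩ := exists_linearIndependent' ℚ E.col
  have : Fintype σ := .ofInjective a ha
  have hf : (Int.cast ∘ f : ι → ℚ) ∈ Submodule.span ℚ (Set.range (E.col ∘ a)) := by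
    rw [hspan, ← range_mulVecLin]
    exact ⟨y, hy⟩
  obtain ⟨w, hw⟩ := (Submodule.mem_span_range_iff_exists_fun ℚ).1 hf
  have hEw : E.submatrix id a *ᵥ w = Int.cast ∘ f := by
    rw [← hw]
    ext i
    simp [mulVec, dotProduct, mul_comm]
  obtain ⟨ρ, hρ⟩ :=
    exists_submatrix_det_ne_zero_of_linearIndependent_col (E := E.submatrix id a) hli
  obtain ⟨z, rfl⟩ := (hE.submatrix ρ a).exists_eq_intCast_of_mulVec_eq hρ
    (funext fun l => congrFun hEw (ρ l))
  refine ⟨Function.extend a z 0, ?_⟩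
  rw [← hEw, ← mulVec_extend_zero E ha]
  congr 1
  ext j
  rw [Function.comp_apply, Function.apply_extend Int.cast]
  rfl

lemma IsTotallyUnimodular.fromRows_neg_one {R : Type*} [CommRing R] [DecidableEq κ]
    {A : Matrix ι κ R} (hA : A.IsTotallyUnimodular) :
    (fromRows A (-1 : Matrix κ κ R)).IsTotallyUnimodular :=
  hA.fromRows_unitlike fun _ i => ⟨i, -1, by
    ext j; by_cases h : i = j <;> simp [Pi.single_apply, h]⟩

lemma IsTotallyUnimodular.exists_intCast_mulVec_le_activeSet_subset [Finite ι] [Fintype κ]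
    {M : Matrix ι κ ℚ} (hM : M.IsTotallyUnimodular) {d : ι → ℤ} {y : κ → ℚ}
    (hy : M *ᵥ y ≤ Int.cast ∘ d) :
    ∃ z : κ → ℤ, M *ᵥ (Int.cast ∘ z) ≤ Int.cast ∘ d ∧
      activeSet M (Int.cast ∘ d) y ⊆ activeSet M (Int.cast ∘ d) (Int.cast ∘ z) := by
  obtain ⟨x, -, hyx, hface⟩ := exists_minimal_face_point hy
  let T := activeSet M (Int.cast ∘ d) x
  obtain ⟨z, hz⟩ := (hM.submatrix ((↑) : T → ι) id).exists_intCast_mulVec_eq (f := d ∘ (↑))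
    (y := x) (funext fun i => i.2)
  have hzT : Set.EqOn (M *ᵥ (Int.cast ∘ z)) (Int.cast ∘ d) T := fun i hi => congrFun hz ⟨i, hi⟩
  exact ⟨z, hface _ hzT, fun i hi => hzT (hyx hi)⟩

lemma IsTotallyUnimodular.exists_intCast_dotProduct_eq [Finite ι] [Fintype κ]
    {M : Matrix ι κ ℚ} (hM : M.IsTotallyUnimodular) {d : ι → ℤ} {c y : κ → ℚ}
    (hy : M *ᵥ y ≤ Int.cast ∘ d) (hmax : ∀ x, M *ᵥ x ≤ Int.cast ∘ d → c ⬝ᵥ x ≤ c ⬝ᵥ y) :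
    ∃ z : κ → ℤ, M *ᵥ (Int.cast ∘ z) ≤ Int.cast ∘ d ∧ c ⬝ᵥ (Int.cast ∘ z) = c ⬝ᵥ y := by
  obtain ⟨z, hz, hyz⟩ := hM.exists_intCast_mulVec_le_activeSet_subset hy
  exact ⟨z, hz, dotProduct_eq_of_activeSet_subset hy hmax hz hyz⟩

end TotallyUnimodular

end Matrix

/-- Integrality of linear programs with totally unimodular coefficient matrix:
if the maximum of `cᵀx` over `P = {x : A x ≤ b, x ≥ 0}` is attained, then it is
attained at a point with all entries integer. -/
theorem totallyUnimodular_LP_has_integer_optimum {m n : ℕ}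
    (A : Matrix (Fin m) (Fin n) ℚ) (hA : A.IsTotallyUnimodular)
    (b : Fin m → ℚ) (hb : ∀ i : Fin m, ∃ z : ℤ, b i = (z : ℚ))
    (c : Fin n → ℚ)
    (P : Set (Fin n → ℚ)) (hP : P = {x : Fin n → ℚ | A.mulVec x ≤ b ∧ 0 ≤ x})
    (xstar : Fin n → ℚ) (hxstar : xstar ∈ P)
    (hmax : ∀ x ∈ P, c ⬝ᵥ x ≤ c ⬝ᵥ xstar) :
    ∃ x ∈ P, (∀ j : Fin n, ∃ k : ℤ, x j = (k : ℚ)) ∧ c ⬝ᵥ x = c ⬝ᵥ xstar := by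
  choose bℤ hbℤ using hb
  have hd : Sum.elim b (0 : Fin n → ℚ) = Int.cast ∘ Sum.elim bℤ 0 := by
    ext (i | j) <;> simp [hbℤ]
  have hPM : P = {x | A.fromRows (-1 : Matrix (Fin n) (Fin n) ℚ) *ᵥ x ≤ Int.cast ∘ Sum.elim bℤ 0} :=
    by simp only [hP, ← hd, Matrix.fromRows_neg_one_mulVec_le_iff]
  subst hPM
  obtain ⟨z, hz, hcz⟩ := hA.fromRows_neg_one.exists_intCast_dotProduct_eq hxstar hmax
  exact ⟨Int.cast ∘ z, hz, fun j => ⟨z j, rfl⟩, hcz⟩
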